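/- arXiv:2206.05585 — 9 statements merged into one kernel-verified Lean document; each statement's English description precedes it below -/
import Mathlib

section
/- Let R_j = Y_j - (1/n)∑_{i=1}^n Y_i for j = 1,…,n, and define W_j = R_{j+1} - (1/(√n + 1)) R_1 for j = 1,…,n-1. Then ∑_{j=1}^{n-1} W_j² = ∑_{j=1}^n R_j² (as an algebraic identity for any real Y_1,…,Y_n). -/
/-!
On residual vectors, `R ↦ W` acts like a Householder reflection: since the residuals sum to
zero, `∑ R (j + 1) = -R 0`, and expanding the squares leaves
`∑ R (j + 1) ^ 2 + (2 c + (n - 1) c ^ 2) R 0 ^ 2`. The coefficient `c = 1 / (√n + 1)` is the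
root of `2 c + (n - 1) c ^ 2 = 1`, so this is `∑ R j ^ 2`.
-/

open Finset

theorem sum_sub_sum_div_card {ι K : Type*} [Field K] [CharZero K] (s : Finset ι) (f : ι → K) :
    ∑ i ∈ s, (f i - (∑ j ∈ s, f j) / #s) = 0 := by
  rcases s.eq_empty_or_nonempty with rfl | hs
  · simp
  rw [sum_sub_distrib, sum_const, nsmul_eq_mul, mul_div_cancel₀ _ (by simpa using hs.ne_empty),
    sub_self]

theorem Real.two_mul_add_sub_one_mul_sq_one_div_sqrt_add_one {x : ℝ} (hx : 0 ≤ x) :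
    2 * (1 / (√x + 1)) + (x - 1) * (1 / (√x + 1)) ^ 2 = 1 := by
  have hsq : √x ^ 2 = x := Real.sq_sqrt hx
  field_simp
  linear_combination -hsq

theorem sum_range_sq_sub_mul_eq_sum_range_succ_sq (m : ℕ) (R : ℕ → ℝ) {c : ℝ}
    (hR : ∑ j ∈ range (m + 1), R j = 0) (hc : 2 * c + m * c ^ 2 = 1) :
    ∑ j ∈ range m, (R (j + 1) - c * R 0) ^ 2 = ∑ j ∈ range (m + 1), R j ^ 2 := by
  have htail : ∑ j ∈ range m, R (j + 1) = -R 0 := by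
    rw [sum_range_succ'] at hR
    linarith
  calc ∑ j ∈ range m, (R (j + 1) - c * R 0) ^ 2
      = ∑ j ∈ range m, R (j + 1) ^ 2 - 2 * c * R 0 * ∑ j ∈ range m, R (j + 1)
          + m * (c ^ 2 * R 0 ^ 2) := by
        simp only [sub_sq, sum_add_distrib, sum_sub_distrib, ← sum_mul, ← mul_sum, sum_const,
          card_range, nsmul_eq_mul]
        ring
    _ = ∑ j ∈ range m, R (j + 1) ^ 2 + (2 * c + m * c ^ 2) * R 0 ^ 2 := by
        rw [htail]
        ring
    _ = ∑ j ∈ range (m + 1), R j ^ 2 := by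
        rw [hc, one_mul, sum_range_succ' _ m]

theorem stmt_0_general (n : ℕ) (Y R W : ℕ → ℝ)
    (hR : ∀ j, R j = Y j - (∑ i ∈ Finset.range n, Y i) / n)
    (hW : ∀ j, W j = R (j + 1) - (1 / (Real.sqrt n + 1)) * R 0) :
    ∑ j ∈ Finset.range (n - 1), (W j) ^ 2 = ∑ j ∈ Finset.range n, (R j) ^ 2 := by
  rcases n with _ | m
  · simp
  have hsum : ∑ j ∈ range (m + 1), R j = 0 := by
    simpa only [hR, card_range] using sum_sub_sum_div_card (range (m + 1)) Y
  have hc := Real.two_mul_add_sub_one_mul_sq_one_div_sqrt_add_one (Nat.cast_nonneg (m + 1))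
  simp only [hW, Nat.add_sub_cancel]
  exact sum_range_sq_sub_mul_eq_sum_range_succ_sq m R hsum (by simpa using hc)

theorem stmt_0 (n : ℕ) (hn : 2 ≤ n) (Y R W : ℕ → ℝ)
    (hR : ∀ j, R j = Y j - (∑ i ∈ Finset.range n, Y i) / n)
    (hW : ∀ j, W j = R (j + 1) - (1 / (Real.sqrt n + 1)) * R 0) :
    ∑ j ∈ Finset.range (n - 1), (W j) ^ 2 = ∑ j ∈ Finset.range n, (R j) ^ 2 :=
  stmt_0_general n Y R W hR hW
end

section
/- Let R_j = Y_j - (1/n)∑_{i=1}^n Y_i and define W_j = R_{j+1} + (1/(√n - 1)) R_1 for j = 1,…,n-1. Then ∑_{j=1}^{n-1} W_j² = ∑_{j=1}^n R_j² for any real Y_1,…,Y_n. -/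
/-!
Split off the first residual: `∑ R_j² = R_1² + ∑_{j ≥ 2} R_j²`, and since the residuals sum to
zero, `∑_{j ≥ 2} R_j = -R_1`. Expanding the squares, the shift `c R_1` with `c = 1/(√n - 1)`
therefore adds `((n - 1) c² - 2c) R_1²` to `∑_{j ≥ 2} R_j²`, and `c` is precisely a root of
`(n - 1) c² - 2c - 1 = 0`.
-/

open Finset

theorem Finset.sum_sub_sum_div_card_eq_zero {ι 𝕜 : Type*} [Field 𝕜] [CharZero 𝕜]
    (s : Finset ι) (f : ι → 𝕜) : ∑ i ∈ s, (f i - (∑ j ∈ s, f j) / #s) = 0 := by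
  rcases s.eq_empty_or_nonempty with rfl | hs
  · simp
  · rw [sum_sub_distrib, sum_const, nsmul_eq_mul,
      mul_div_cancel₀ _ (Nat.cast_ne_zero.mpr hs.card_ne_zero), sub_self]

theorem Finset.sum_sq_add_mul_eq {ι A : Type*} [CommRing A] (s : Finset ι) (x : ι → A) {a c : A}
    (hsum : ∑ i ∈ s, x i = -a) (hc : #s * c ^ 2 - 2 * c - 1 = 0) :
    ∑ i ∈ s, (x i + c * a) ^ 2 = ∑ i ∈ s, x i ^ 2 + a ^ 2 := by
  have hexpand : ∀ i, (x i + c * a) ^ 2 = x i ^ 2 + (2 * c * a) * x i + c ^ 2 * a ^ 2 :=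
    fun i => by ring
  simp only [hexpand, sum_add_distrib, ← mul_sum, hsum, sum_const, nsmul_eq_mul]
  linear_combination a ^ 2 * hc

theorem one_div_sqrt_sub_one_quadratic {m : ℕ} (hm : m ≠ 0) :
    m * (1 / (Real.sqrt (m + 1) - 1)) ^ 2 - 2 * (1 / (Real.sqrt (m + 1) - 1)) - 1 = 0 := by
  have hsq : Real.sqrt (m + 1) ^ 2 = m + 1 := Real.sq_sqrt (by positivity)
  have hne : Real.sqrt (m + 1) - 1 ≠ 0 := by
    rw [sub_ne_zero, Ne, Real.sqrt_eq_one]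
    exact_mod_cast (Nat.succ_ne_succ_iff.mpr hm)
  field_simp
  linear_combination -hsq

theorem stmt_1 (n : ℕ) (hn : 2 ≤ n) (Y R W : ℕ → ℝ)
    (hR : ∀ j, R j = Y j - (∑ i ∈ Finset.range n, Y i) / n)
    (hW : ∀ j, W j = R (j + 1) + (1 / (Real.sqrt n - 1)) * R 0) :
    ∑ j ∈ Finset.range (n - 1), (W j) ^ 2 = ∑ j ∈ Finset.range n, (R j) ^ 2 := by
  obtain ⟨m, rfl⟩ : ∃ m, n = m + 1 := ⟨n - 1, by omega⟩
  have hRsum : ∑ j ∈ range (m + 1), R j = 0 := by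
    simpa only [hR, card_range] using sum_sub_sum_div_card_eq_zero (range (m + 1)) Y
  have hRtail : ∑ j ∈ range m, R (j + 1) = -R 0 := by
    rw [sum_range_succ'] at hRsum
    linarith
  have hc : (#(range m) : ℝ) * (1 / (Real.sqrt (m + 1) - 1)) ^ 2
      - 2 * (1 / (Real.sqrt (m + 1) - 1)) - 1 = 0 := by
    rw [card_range]
    exact one_div_sqrt_sub_one_quadratic (by omega)
  push_cast at hW
  simp only [hW, Nat.add_sub_cancel, sum_sq_add_mul_eq _ _ hRtail hc, sum_range_succ' _ m]
end

section
/- For c real and n ≥ 2, the identity ∑_{j=1}^{n-1} (R_{j+1} + c R_1)² = ∑_{j=1}^n R_j², holding for all real Y_1,…,Y_n (where R_j = Y_j - Ȳ), is equivalent to (n-1)c² - 2c - 1 = 0, whose only solutions are c = 1/(√n - 1) and c = -1/(√n + 1). -/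
/-!
Write `R j = Y j - Ȳ`. Expanding the square and using `∑ R j = 0`, i.e. `∑_{j ≥ 1} R j = -R 0`,
gives `∑_{j<n-1} (R (j+1) + c R 0)² = ∑_{j<n} R j² + ((n-1)c² - 2c - 1) R 0²`. The identity thus
holds for all `Y` exactly when the coefficient vanishes, as `R 0 = 1 - 1/n ≠ 0` for `Y = δ₀`.
Finally `(n-1)c² - 2c - 1 = ((√n - 1)c - 1)((√n + 1)c + 1)`.
-/

open Finset

theorem sum_sq_add_mul_of_sum_eq_zero {R : Type*} [CommRing R] (k : ℕ) (c : R) (r : ℕ → R)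
    (hr : ∑ j ∈ range (k + 1), r j = 0) :
    ∑ j ∈ range k, (r (j + 1) + c * r 0) ^ 2
      = ∑ j ∈ range (k + 1), r j ^ 2 + (k * c ^ 2 - 2 * c - 1) * r 0 ^ 2 := by
  have h_tail : ∑ j ∈ range k, r (j + 1) = -r 0 := by
    rw [sum_range_succ'] at hr
    exact eq_neg_of_add_eq_zero_left hr
  have h_sq : ∑ j ∈ range (k + 1), r j ^ 2 = ∑ j ∈ range k, r (j + 1) ^ 2 + r 0 ^ 2 :=
    sum_range_succ' (fun j => r j ^ 2) k
  simp only [add_sq, sum_add_distrib, ← sum_mul, ← mul_sum, h_tail, h_sq, sum_const, card_range,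
    nsmul_eq_mul]
  ring

theorem sum_sub_mean_eq_zero {K : Type*} [Field K] [CharZero K] {n : ℕ} (hn : n ≠ 0)
    (Y : ℕ → K) : ∑ j ∈ range n, (Y j - (∑ i ∈ range n, Y i) / n) = 0 := by
  rw [sum_sub_distrib, sum_const, card_range, nsmul_eq_mul,
    mul_div_cancel₀ _ (Nat.cast_ne_zero.mpr hn), sub_self]

theorem sum_sq_sub_mean_shift {K : Type*} [Field K] [CharZero K] {n : ℕ} (hn : n ≠ 0) (c : K)
    (Y : ℕ → K) :
    ∑ j ∈ range (n - 1),
        ((Y (j + 1) - (∑ i ∈ range n, Y i) / n) + c * (Y 0 - (∑ i ∈ range n, Y i) / n)) ^ 2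
      = ∑ j ∈ range n, (Y j - (∑ i ∈ range n, Y i) / n) ^ 2
        + (((n : K) - 1) * c ^ 2 - 2 * c - 1) * (Y 0 - (∑ i ∈ range n, Y i) / n) ^ 2 := by
  obtain ⟨k, rfl⟩ := Nat.exists_eq_succ_of_ne_zero hn
  simpa using sum_sq_add_mul_of_sum_eq_zero k c _ (sum_sub_mean_eq_zero hn Y)

theorem single_sub_mean_ne_zero {K : Type*} [Field K] [CharZero K] {n : ℕ} (hn : n ≠ 1) :
    (Pi.single 0 1 : ℕ → K) 0 - (∑ i ∈ range n, (Pi.single 0 1 : ℕ → K) i) / n ≠ 0 := by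
  rcases Nat.eq_zero_or_pos n with rfl | hn₀
  · simp
  rw [sum_pi_single', if_pos (mem_range.mpr hn₀), Pi.single_eq_same, Ne, sub_eq_zero, eq_comm,
    div_eq_one_iff_eq (Nat.cast_ne_zero.mpr hn₀.ne')]
  exact (Nat.cast_ne_one.mpr hn).symm

theorem sub_one_mul_sq_sub_two_mul_sub_one_eq_zero_iff {x : ℝ} (hx₀ : 0 ≤ x) (hx₁ : x ≠ 1)
    (c : ℝ) :
    (x - 1) * c ^ 2 - 2 * c - 1 = 0 ↔ c = 1 / (√x - 1) ∨ c = -1 / (√x + 1) := by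
  have hs : √x ≠ 1 := by rwa [Ne, Real.sqrt_eq_one]
  have hs_sub : √x - 1 ≠ 0 := sub_ne_zero.mpr hs
  have hs_add : √x + 1 ≠ 0 := by positivity
  have h_factor : (x - 1) * c ^ 2 - 2 * c - 1 = ((√x - 1) * c - 1) * ((√x + 1) * c + 1) := by
    nlinarith [Real.sq_sqrt hx₀]
  rw [h_factor, mul_eq_zero, eq_div_iff hs_sub, eq_div_iff hs_add, sub_eq_zero,
    add_eq_zero_iff_eq_neg, mul_comm c, mul_comm c]

theorem stmt_2 (n : ℕ) (hn : 2 ≤ n) (c : ℝ) :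
    ((∀ Y : ℕ → ℝ,
        ∑ j ∈ Finset.range (n - 1),
            ((Y (j + 1) - (∑ i ∈ Finset.range n, Y i) / n) +
              c * (Y 0 - (∑ i ∈ Finset.range n, Y i) / n)) ^ 2 =
          ∑ j ∈ Finset.range n, (Y j - (∑ i ∈ Finset.range n, Y i) / n) ^ 2) ↔
      ((n : ℝ) - 1) * c ^ 2 - 2 * c - 1 = 0) ∧
    (((n : ℝ) - 1) * c ^ 2 - 2 * c - 1 = 0 ↔
      c = 1 / (Real.sqrt n - 1) ∨ c = -1 / (Real.sqrt n + 1)) := by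
  have h_shift := sum_sq_sub_mean_shift (by omega : n ≠ 0) c
  refine ⟨⟨fun h => ?_, fun h Y => by rw [h_shift, h, zero_mul, add_zero]⟩,
    sub_one_mul_sq_sub_two_mul_sub_one_eq_zero_iff n.cast_nonneg
      (Nat.cast_ne_one.mpr (by omega)) c⟩
  have h_δ := h_shift (Pi.single 0 1)
  rw [h, left_eq_add, mul_eq_zero] at h_δ
  exact h_δ.resolve_right (pow_ne_zero 2 (single_sub_mean_ne_zero (by omega)))
end

section
/- Let B be a real symmetric n×n matrix. Then rank(B) + rank(I_n - B) = n if and only if B is idempotent (B² = B). -/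
/-!
For an endomorphism `f`, the ranges of `f` and `1 - f` span the whole space since
`x = f x + (1 - f) x`, so by the dimension formula for `U ⊔ V` and `U ⊓ V` the ranks add up to
the dimension exactly when the two ranges meet trivially. Their intersection contains the range
of `f - f * f = f * (1 - f) = (1 - f) * f`, so it is trivial only if `f` is idempotent;
conversely, an idempotent `f` fixes its range and kills that of `1 - f`.
-/

open Module

namespace LinearMap

section Ring

variable {R M : Type*} [Ring R] [AddCommGroup M] [Module R M]

theorem range_sup_range_one_sub (f : End R M) : range f ⊔ range (1 - f) = ⊤ :=
  eq_top_iff.2 fun x _ => by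
    have hx := Submodule.add_mem_sup (mem_range_self f x) (mem_range_self (1 - f) x)
    rwa [← add_apply, add_sub_cancel, End.one_apply] at hx

theorem range_inf_range_one_sub_eq_bot_iff (f : End R M) :
    range f ⊓ range (1 - f) = ⊥ ↔ IsIdempotentElem f := by
  refine ⟨fun h => ?_, fun hf => eq_bot_iff.2 ?_⟩
  · ext x
    have hmem : f x - f (f x) ∈ range f ⊓ range (1 - f) :=
      ⟨⟨x - f x, by simp⟩, ⟨f x, by simp⟩⟩
    rw [h, Submodule.mem_bot, sub_eq_zero] at hmem
    exact hmem.symm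
  · rintro _ ⟨⟨x, rfl⟩, z, hz⟩
    have : f (f x) = f z - f (f z) := by simp [← hz]
    simpa [← End.mul_apply, hf.eq] using this

end Ring

variable {K V : Type*} [DivisionRing K] [AddCommGroup V] [Module K V] [FiniteDimensional K V]

theorem finrank_range_add_finrank_range_one_sub_eq_iff (f : End K V) :
    finrank K (range f) + finrank K (range (1 - f)) = finrank K V ↔ IsIdempotentElem f := by
  rw [← range_inf_range_one_sub_eq_bot_iff, ← Submodule.finrank_eq_zero, ← finrank_top K V,
    ← range_sup_range_one_sub f, ← Submodule.finrank_sup_add_finrank_inf_eq]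
  omega

end LinearMap

namespace Matrix

variable {n : Type*} [Fintype n] [DecidableEq n]

theorem mulVecLin_one_sub {R : Type*} [CommRing R] (A : Matrix n n R) :
    (1 - A).mulVecLin = 1 - A.mulVecLin := by
  ext
  simp

theorem isIdempotentElem_mulVecLin_iff {R : Type*} [CommSemiring R] (A : Matrix n n R) :
    IsIdempotentElem A.mulVecLin ↔ IsIdempotentElem A := by
  rw [IsIdempotentElem, IsIdempotentElem, End.mul_eq_comp, ← mulVecLin_mul]
  exact toLin'.injective.eq_iff

theorem rank_add_rank_one_sub_eq_iff {K : Type*} [Field K] (A : Matrix n n K) :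
    A.rank + (1 - A).rank = Fintype.card n ↔ IsIdempotentElem A := by
  rw [rank, rank, mulVecLin_one_sub, ← finrank_fintype_fun_eq_card (R := K),
    LinearMap.finrank_range_add_finrank_range_one_sub_eq_iff, isIdempotentElem_mulVecLin_iff]

end Matrix

theorem stmt_5_general (n : ℕ) (B : Matrix (Fin n) (Fin n) ℝ) :
    B.rank + (1 - B).rank = n ↔ B * B = B := by
  simpa [IsIdempotentElem] using B.rank_add_rank_one_sub_eq_iff

theorem stmt_5 (n : ℕ) (B : Matrix (Fin n) (Fin n) ℝ) (hB : B.IsSymm) :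
    B.rank + (1 - B).rank = n ↔ B * B = B :=
  stmt_5_general n B
end

section
/- For any p×p real matrix M, there exists a diagonal matrix D with diagonal entries ±1 (so D² = I_p) such that D - M is invertible. -/
open Matrix

private lemma key_diff (n : ℕ) (M : Matrix (Fin (n+1)) (Fin (n+1)) ℝ) (d' : Fin n → ℝ) :
    det (diagonal (Fin.cons 1 d') - M) - det (diagonal (Fin.cons (-1) d') - M)
      = 2 * det (diagonal d' - M.submatrix Fin.succ Fin.succ) := by
  have hsub : ∀ x : ℝ, ∀ j : Fin (n+1),
      (diagonal (Fin.cons x d') - M).submatrix Fin.succ (Fin.succAbove j)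
        = (diagonal (Fin.cons 1 d') - M).submatrix Fin.succ (Fin.succAbove j) := by
    intro x j
    ext i k
    simp [Matrix.diagonal_apply, Fin.cons_succ]
  have hsub0 : (diagonal (Fin.cons (1:ℝ) d') - M).submatrix Fin.succ (Fin.succAbove 0)
      = diagonal d' - M.submatrix Fin.succ Fin.succ := by
    ext i k
    simp [Matrix.diagonal_apply, Fin.succ_succAbove_zero, Fin.cons_succ]
  rw [det_succ_row_zero, det_succ_row_zero, ← Finset.sum_sub_distrib]
  rw [Finset.sum_eq_single (0 : Fin (n+1))]
  · rw [hsub (-1) 0, hsub0]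
    simp [Matrix.diagonal_apply, Fin.cons_zero]
    ring
  · intro j _ hj
    rw [hsub (-1) j]
    have : (diagonal (Fin.cons (1:ℝ) d') - M) 0 j = (diagonal (Fin.cons (-1:ℝ) d') - M) 0 j := by
      simp [Matrix.diagonal_apply, (Ne.symm hj)]
    rw [this]
    ring
  · intro h
    simp at h

theorem stmt_7 (p : ℕ) (M : Matrix (Fin p) (Fin p) ℝ) :
    ∃ d : Fin p → ℝ, (∀ i, d i = 1 ∨ d i = -1) ∧
      IsUnit (Matrix.diagonal d - M) := by
  induction p with
  | zero =>
      refine ⟨fun _ => 1, fun i => i.elim0, ?_⟩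
      rw [Matrix.isUnit_iff_isUnit_det, isUnit_iff_ne_zero]
      simp [Matrix.det_fin_zero]
  | succ n ih =>
      obtain ⟨d', hd', hu⟩ := ih (M.submatrix Fin.succ Fin.succ)
      rw [Matrix.isUnit_iff_isUnit_det, isUnit_iff_ne_zero] at hu
      have hdiff := key_diff n M d'
      by_cases h1 : det (diagonal (Fin.cons 1 d') - M) = 0
      · refine ⟨Fin.cons (-1) d', ?_, ?_⟩
        · intro i
          refine Fin.cases ?_ ?_ i
          · right; simp
          · intro j; simpa using hd' j
        · rw [Matrix.isUnit_iff_isUnit_det, isUnit_iff_ne_zero]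
          intro h2
          rw [h1, h2, zero_sub] at hdiff
          have : det (diagonal d' - M.submatrix Fin.succ Fin.succ) = 0 := by linarith
          exact hu this
      · refine ⟨Fin.cons 1 d', ?_, ?_⟩
        · intro i
          refine Fin.cases ?_ ?_ i
          · left; simp
          · intro j; simpa using hd' j
        · rw [Matrix.isUnit_iff_isUnit_det, isUnit_iff_ne_zero]
          exact h1
end

section
/- Let c_1,…,c_p and r_1,…,r_p be vectors in ℝ^p such that (i) the j-th component of c_i and of r_i is zero for all j < i; (ii) if the i-th component of c_i is nonzero then the i-th component of r_i is nonzero; and (iii) if the i-th component of c_i is zero then c_i = 0. Then rank(∑_{i=1}^p c_i r_iᵀ) equals the number of indices i with c_i ≠ 0. -/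
open Matrix

lemma tri_li {p : ℕ} (f : Fin p → Fin p → ℝ) (S : Set (Fin p))
    (hd : ∀ i ∈ S, f i i ≠ 0) (ht : ∀ i j : Fin p, j < i → f i j = 0) :
    LinearIndependent ℝ (fun i : S => f i) := by
  classical
  rw [Fintype.linearIndependent_iff]
  intro g hg
  suffices h : ∀ n : ℕ, ∀ hn : n < p, ∀ hS : (⟨n, hn⟩ : Fin p) ∈ S,
      g ⟨⟨n, hn⟩, hS⟩ = 0 by
    rintro ⟨⟨n, hn⟩, hS⟩; exact h n hn hS
  intro n
  induction n using Nat.strong_induction_on with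
  | _ n ih =>
    intro hn hS
    have hval := congrFun hg ⟨n, hn⟩
    simp only [Finset.sum_apply, Pi.smul_apply, smul_eq_mul, Pi.zero_apply] at hval
    rw [Finset.sum_eq_single (⟨⟨n, hn⟩, hS⟩ : S)] at hval
    · exact (mul_eq_zero.mp hval).resolve_right (hd _ hS)
    · rintro ⟨⟨m, hm⟩, hmS⟩ _ hne
      rcases lt_trichotomy m n with h | h | h
      · rw [ih m h hm hmS, zero_mul]
      · exact absurd (by simp [h]) hne
      · rw [ht _ _ (by simpa using h), mul_zero]
    · intro h; exact absurd (Finset.mem_univ _) h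

theorem stmt_8 (p : ℕ) (c r : Fin p → Fin p → ℝ)
    (h1 : ∀ i j : Fin p, j < i → c i j = 0 ∧ r i j = 0)
    (h2 : ∀ i : Fin p, c i i ≠ 0 → r i i ≠ 0)
    (h3 : ∀ i : Fin p, c i i = 0 → c i = 0) :
    (∑ i : Fin p, Matrix.vecMulVec (c i) (r i)).rank =
      Set.ncard {i : Fin p | c i ≠ 0} := by
  classical
  set S : Set (Fin p) := {i : Fin p | c i ≠ 0} with hS
  have hdc : ∀ i ∈ S, c i i ≠ 0 := fun i hi h => hi (h3 i h)
  have hdr : ∀ i ∈ S, r i i ≠ 0 := fun i hi => h2 i (hdc i hi)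
  have hlic : LinearIndependent ℝ (fun i : S => c i) :=
    tri_li c S hdc (fun i j h => (h1 i j h).1)
  have hlir : LinearIndependent ℝ (fun i : S => r i) :=
    tri_li r S hdr (fun i j h => (h1 i j h).2)
  let C : Matrix (Fin p) S ℝ := fun j i => c i j
  let R : Matrix S (Fin p) ℝ := fun i j => r i j
  have hA : (∑ i : Fin p, Matrix.vecMulVec (c i) (r i)) = C * R := by
    ext j k
    rw [Matrix.mul_apply]
    simp only [Finset.sum_apply, Matrix.sum_apply, Matrix.vecMulVec_apply, C, R]
    rw [Finset.sum_set_coe (f := fun i => c i j * r i k)]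
    refine (Finset.sum_subset (Finset.subset_univ _) ?_).symm
    intro i _ hi
    have : c i = 0 := by
      by_contra h
      exact hi (Set.mem_toFinset.mpr h)
    simp [this]
  have hCinj : Function.Injective C.mulVecLin := by
    have : Function.Injective C.mulVec := by
      rw [Matrix.mulVec_injective_iff]
      exact hlic
    exact this
  rw [hA, Matrix.rank, Matrix.mulVecLin_mul, LinearMap.range_comp,
    ← (Submodule.equivMapOfInjective _ hCinj _).finrank_eq]
  have : Module.finrank ℝ (LinearMap.range R.mulVecLin) = R.rank := rfl
  rw [this, hlir.rank_matrix]
  simp [Set.ncard_eq_toFinset_card', Set.toFinset_card]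
end

section
/- Let X be an n×p real matrix with orthonormal columns (XᵀX = I_p), p < n. Write X^{(p)} for its first p rows and X_{(p)} for its last n-p rows, and similarly for R ∈ ℝⁿ. Suppose XᵀR = 0, S is a p×p matrix with (S⁻¹ + X^{(p)})ᵀ(S⁻¹ + X^{(p)}) = I_p (S invertible), and W = R_{(p)} + X_{(p)} S R^{(p)}. Then WᵀW = RᵀR. -/
/-!
Stack the vector `V = R + X S R⁽ᵖ⁾`. Its top block is `R⁽ᵖ⁾ + X⁽ᵖ⁾ S R⁽ᵖ⁾ = (S⁻¹ + X⁽ᵖ⁾) (S R⁽ᵖ⁾)`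
and its bottom block is `W`. Since `R ⊥ col X` and `X` is an isometry,
`‖V‖² = ‖R‖² + ‖S R⁽ᵖ⁾‖²`, while the top block has norm `‖S R⁽ᵖ⁾‖²` because `S⁻¹ + X⁽ᵖ⁾` is
orthogonal. Subtracting, `‖W‖² = ‖R‖²`.
-/

open Matrix

section

variable {α m n : Type*} [Fintype m] [Fintype n] [CommSemiring α]

theorem Matrix.mulVec_dotProduct_mulVec_of_transpose_mul_self [DecidableEq n] {A : Matrix m n α}
    (hA : Aᵀ * A = 1) (v w : n → α) : A *ᵥ v ⬝ᵥ A *ᵥ w = v ⬝ᵥ w := by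
  rw [dotProduct_mulVec, ← vecMul_transpose, vecMul_vecMul, hA, vecMul_one]

theorem Matrix.dotProduct_mulVec_eq_zero_of_transpose_mulVec_eq_zero {A : Matrix m n α}
    {v : m → α} (hv : Aᵀ *ᵥ v = 0) (u : n → α) : v ⬝ᵥ A *ᵥ u = 0 := by
  rw [dotProduct_mulVec, ← mulVec_transpose, hv, zero_dotProduct]

theorem Matrix.add_mulVec_dotProduct_self_of_transpose_mulVec_eq_zero {A : Matrix m n α}
    {v : m → α} (hv : Aᵀ *ᵥ v = 0) (u : n → α) :
    (v + A *ᵥ u) ⬝ᵥ (v + A *ᵥ u) = v ⬝ᵥ v + A *ᵥ u ⬝ᵥ A *ᵥ u := by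
  have h := dotProduct_mulVec_eq_zero_of_transpose_mulVec_eq_zero hv u
  rw [add_dotProduct, dotProduct_add, dotProduct_add, dotProduct_comm (A *ᵥ u) v, h]
  simp only [add_zero, zero_add]

end

theorem Matrix.dotProduct_fin_add {α : Type*} [AddCommMonoid α] [Mul α] {p q : ℕ}
    (v w : Fin (p + q) → α) :
    v ⬝ᵥ w = (fun j => v (Fin.castAdd q j)) ⬝ᵥ (fun j => w (Fin.castAdd q j)) +
      (fun i => v (Fin.natAdd p i)) ⬝ᵥ (fun i => w (Fin.natAdd p i)) :=
  Fin.sum_univ_add _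

theorem stmt_14_general (p q : ℕ)
    (X : Matrix (Fin (p + q)) (Fin p) ℝ)
    (hX : X.transpose * X = 1)
    (R : Fin (p + q) → ℝ) (hXR : X.transpose.mulVec R = 0)
    (S : Matrix (Fin p) (Fin p) ℝ) (hS : IsUnit S)
    (Xtop : Matrix (Fin p) (Fin p) ℝ) (hXtop : Xtop = X.submatrix (Fin.castAdd q) id)
    (Xbot : Matrix (Fin q) (Fin p) ℝ) (hXbot : Xbot = X.submatrix (Fin.natAdd p) id)
    (hOrth : (S⁻¹ + Xtop).transpose * (S⁻¹ + Xtop) = 1)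
    (W : Fin q → ℝ)
    (hW : W = (fun i => R (Fin.natAdd p i)) +
      (Xbot * S).mulVec (fun j => R (Fin.castAdd q j))) :
    dotProduct W W = dotProduct R R := by
  set u := S *ᵥ fun j => R (Fin.castAdd q j)
  set V := R + X *ᵥ u
  have hSS : S⁻¹ * S = 1 := nonsing_inv_mul S ((isUnit_iff_isUnit_det S).mp hS)
  have hV_top : (fun j => V (Fin.castAdd q j)) = (S⁻¹ + Xtop) *ᵥ u := by
    rw [add_mulVec, mulVec_mulVec, hSS, one_mulVec, hXtop]
    rfl
  have hV_bot : (fun i => V (Fin.natAdd p i)) = W := by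
    rw [hW, ← mulVec_mulVec, hXbot]
    rfl
  calc W ⬝ᵥ W = V ⬝ᵥ V - (S⁻¹ + Xtop) *ᵥ u ⬝ᵥ (S⁻¹ + Xtop) *ᵥ u := by
        rw [dotProduct_fin_add V V, hV_top, hV_bot]; ring
    _ = R ⬝ᵥ R := by
        rw [add_mulVec_dotProduct_self_of_transpose_mulVec_eq_zero hXR,
          mulVec_dotProduct_mulVec_of_transpose_mul_self hX,
          mulVec_dotProduct_mulVec_of_transpose_mul_self hOrth]
        ring

theorem stmt_14 (p q : ℕ) (hq : 0 < q)
    (X : Matrix (Fin (p + q)) (Fin p) ℝ)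
    (hX : X.transpose * X = 1)
    (R : Fin (p + q) → ℝ) (hXR : X.transpose.mulVec R = 0)
    (S : Matrix (Fin p) (Fin p) ℝ) (hS : IsUnit S)
    (Xtop : Matrix (Fin p) (Fin p) ℝ) (hXtop : Xtop = X.submatrix (Fin.castAdd q) id)
    (Xbot : Matrix (Fin q) (Fin p) ℝ) (hXbot : Xbot = X.submatrix (Fin.natAdd p) id)
    (hOrth : (S⁻¹ + Xtop).transpose * (S⁻¹ + Xtop) = 1)
    (W : Fin q → ℝ)
    (hW : W = (fun i => R (Fin.natAdd p i)) +
      (Xbot * S).mulVec (fun j => R (Fin.castAdd q j))) :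
    dotProduct W W = dotProduct R R :=
  stmt_14_general p q X hX R hXR S hS Xtop hXtop Xbot hXbot hOrth W hW
end

section
/- Let X be n×p with XᵀX = I_p, p < n, Q a p×p orthogonal matrix with Q - X^{(p)} invertible, and S = (Q - X^{(p)})⁻¹. Then I_p + S X^{(p)} + X^{(p)ᵀ} Sᵀ - S Sᵀ + S X^{(p)} X^{(p)ᵀ} Sᵀ = 0. -/
theorem stmt_16 (p q : ℕ) (hq : 0 < q)
    (X : Matrix (Fin (p + q)) (Fin p) ℝ)
    (hX : X.transpose * X = 1)
    (Xtop : Matrix (Fin p) (Fin p) ℝ) (hXtop : Xtop = X.submatrix (Fin.castAdd q) id)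
    (Q : Matrix (Fin p) (Fin p) ℝ) (hQ : Q.transpose * Q = 1)
    (hQX : IsUnit (Q - Xtop))
    (S : Matrix (Fin p) (Fin p) ℝ) (hS : S = (Q - Xtop)⁻¹) :
    1 + S * Xtop + Xtop.transpose * S.transpose - S * S.transpose +
      S * Xtop * Xtop.transpose * S.transpose = 0 := by
  set M : Matrix (Fin p) (Fin p) ℝ := Q - Xtop with hM
  have hdet : IsUnit M.det := (Matrix.isUnit_iff_isUnit_det M).mp hQX
  have hMS : M * S = 1 := by rw [hS]; exact Matrix.mul_nonsing_inv M hdet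
  have hSM : S * M = 1 := by rw [hS]; exact Matrix.nonsing_inv_mul M hdet
  have hMtSt : Matrix.transpose M * Matrix.transpose S = 1 := by
    rw [← Matrix.transpose_mul, hSM, Matrix.transpose_one]
  have hStMt : Matrix.transpose S * Matrix.transpose M = 1 := by
    rw [← Matrix.transpose_mul, hMS, Matrix.transpose_one]
  have hQQt : Q * Q.transpose = 1 := mul_eq_one_comm.mp hQ
  set E : Matrix (Fin p) (Fin p) ℝ :=
    1 + S * Xtop + Xtop.transpose * S.transpose - S * S.transpose +
      S * Xtop * Xtop.transpose * S.transpose with hE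
  have key : M * E * M.transpose = 0 := by
    have expand : M * E * M.transpose =
        M * M.transpose + (M * S) * (Xtop * M.transpose)
          + (M * Xtop.transpose) * (S.transpose * M.transpose)
          - (M * S) * (S.transpose * M.transpose)
          + (M * S) * (Xtop * Xtop.transpose) * (S.transpose * M.transpose) := by
      rw [hE]; noncomm_ring
    rw [expand, hMS, hStMt]
    simp only [Matrix.one_mul, Matrix.mul_one]
    rw [hM]
    simp only [Matrix.sub_mul, Matrix.mul_sub, Matrix.transpose_sub, hQQt]
    noncomm_ring
  calc E = (S * M) * E * (M.transpose * S.transpose) := by rw [hSM, hMtSt]; simp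
    _ = S * (M * E * M.transpose) * S.transpose := by noncomm_ring
    _ = 0 := by rw [key]; simp
end

section
/- Let n ≥ 2, and for j = 2,…,n define R_j* = Y_j - (1/(n-1))∑_{i=2}^n Y_i, and R_j = Y_j - (1/n)∑_{i=1}^n Y_i. Then for j = 1,…,n-1, R_{j+1} + (1/(√n - 1)) R_1 = R_{j+1}* + (1/√n) R_1*, where R_1* = Y_1 - (1/(n-1))∑_{i=2}^n Y_i. -/
/-!
Indices are the paper's (`Y_1` is `Y 0`). Write `T = ∑_{i ≥ 2} Y_i`, so the full mean is
`(Y_1 + T)/n` and the leave-one-out mean is `T/(n-1)`. Hence `R_j = R_j* - R_1/(n-1)` for `j ≥ 2`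
and `R_1* = n/(n-1) · R_1`. With `s = √n` the claim then reduces to the partial-fraction identity
`1/(s-1) = 1/(s²-1) + (1/s) · s²/(s²-1)`.
-/

open Finset

section Residuals

variable {K : Type*} [Field K] [CharZero K] {n : ℕ} (Y : ℕ → K)

lemma sub_mean_eq_sub_tailMean_sub (hn : 2 ≤ n) (y : K) :
    y - (∑ i ∈ range n, Y i) / n =
      y - (∑ i ∈ Ico 1 n, Y i) / ((n : K) - 1) - (Y 0 - (∑ i ∈ range n, Y i) / n) / ((n : K) - 1) := by
  have hn0 : (n : K) ≠ 0 := by norm_cast; omega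
  have hn1 : (n : K) - 1 ≠ 0 := sub_ne_zero.2 (by norm_cast; omega)
  rw [sum_range_eq_add_Ico Y (by omega)]
  field_simp
  ring

lemma sub_tailMean_eq_mul_sub_mean (hn : 2 ≤ n) :
    Y 0 - (∑ i ∈ Ico 1 n, Y i) / ((n : K) - 1) =
      n / ((n : K) - 1) * (Y 0 - (∑ i ∈ range n, Y i) / n) := by
  have hn0 : (n : K) ≠ 0 := by norm_cast; omega
  have hn1 : (n : K) - 1 ≠ 0 := sub_ne_zero.2 (by norm_cast; omega)
  rw [sum_range_eq_add_Ico Y (by omega)]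
  field_simp
  ring

end Residuals

lemma one_div_sub_one_eq {K : Type*} [Field K] {s : K} (hs : s ^ 2 - 1 ≠ 0) :
    1 / (s - 1) = 1 / (s ^ 2 - 1) + 1 / s * (s ^ 2 / (s ^ 2 - 1)) := by
  have hs1 : s - 1 ≠ 0 := fun h => hs (by linear_combination (s + 1) * h)
  rcases eq_or_ne s 0 with rfl | hs0
  · simp
  field_simp
  ring

theorem stmt_19_general (n : ℕ) (Y R Rs : ℕ → ℝ)
    (hR : ∀ j, R j = Y j - (∑ i ∈ Finset.range n, Y i) / n)
    (hRs : ∀ j, Rs j = Y j - (∑ i ∈ Finset.Ico 1 n, Y i) / ((n : ℝ) - 1)) :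
    ∀ j < n - 1,
      R (j + 1) + (1 / (Real.sqrt n - 1)) * R 0 =
        Rs (j + 1) + (1 / Real.sqrt n) * Rs 0 := by
  intro j hj
  have hn : 2 ≤ n := by omega
  have hR_succ : R (j + 1) = Rs (j + 1) - R 0 / ((n : ℝ) - 1) := by
    rw [hR, hRs, hR]
    exact sub_mean_eq_sub_tailMean_sub Y hn _
  have hRs_zero : Rs 0 = n / ((n : ℝ) - 1) * R 0 := by
    rw [hRs, hR]
    exact sub_tailMean_eq_mul_sub_mean Y hn
  set s := Real.sqrt n
  have hs_sq : s ^ 2 = n := Real.sq_sqrt (Nat.cast_nonneg n)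
  have hsq_gt : (1 : ℝ) < s ^ 2 := by rw [hs_sq]; exact_mod_cast hn
  rw [hR_succ, hRs_zero, ← hs_sq, one_div_sub_one_eq (by linarith)]
  ring

theorem stmt_19 (n : ℕ) (hn : 2 ≤ n) (Y R Rs : ℕ → ℝ)
    (hR : ∀ j, R j = Y j - (∑ i ∈ Finset.range n, Y i) / n)
    (hRs : ∀ j, Rs j = Y j - (∑ i ∈ Finset.Ico 1 n, Y i) / ((n : ℝ) - 1)) :
    ∀ j < n - 1,
      R (j + 1) + (1 / (Real.sqrt n - 1)) * R 0 =
        Rs (j + 1) + (1 / Real.sqrt n) * Rs 0 :=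
  stmt_19_general n Y R Rs hR hRs
end
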